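/- Let x ≠ 0, 0 < r < 1 − |x|, and let |a| > 1 satisfy (|a|²+1)/|a| = (1+|x|²−r²)/|x|. For t ∈ [0,|x|] let r_t* be defined by (r_t*)² = |a|(1−|a|t)/(|a|−t). Then for all t ∈ (0, |x|], log(1/r_t*) > t²(1 − |x| − r). -/

import Mathlib

/-!
Write `X = ‖x‖`. Clearing denominators in the defining relation of `A` gives
`A r² = (A - X)(1 - A X)`, so `A X < 1` and the radii `r_t*` are well defined and lie in `(0, 1)`.
Since `A ↦ A + A⁻¹` is increasing on `[1, ∞)`, the relation also yields `A - 1 > 1 - X - r`.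
Finally `log (1 / r_t*) ≥ (1 - r_t*²) / 2 = t (A² - 1) / (2 (A - t))`, and
`A² - 1 > 2 (A - 1) > 2 t (A - t) (1 - X - r)` because `t (A - t) < A X < 1`.
-/

open Real

lemma Real.one_sub_div_two_le_log_one_div_sqrt {S : ℝ} (hS : 0 < S) :
    (1 - S) / 2 ≤ log (1 / √S) := by
  rw [one_div, log_inv, log_sqrt hS.le]
  linarith [log_le_sub_one_of_pos hS]

lemma lt_of_add_inv_lt_add_inv {a b : ℝ} (ha : 1 ≤ a) (hb : 1 ≤ b)
    (h : a + a⁻¹ < b + b⁻¹) : a < b := by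
  by_contra! hba
  have hdiff : a + a⁻¹ - (b + b⁻¹) = (a - b) * (a * b - 1) / (a * b) := by
    field_simp
    ring
  have : 0 ≤ (a - b) * (a * b - 1) / (a * b) :=
    div_nonneg (mul_nonneg (by linarith) (by nlinarith)) (by positivity)
  linarith

section InvertedBall

variable {X r A : ℝ}

lemma mul_sq_eq_of_sq_add_one_div_eq (hX : 0 < X) (hA : 0 < A)
    (h : (A ^ 2 + 1) / A = (1 + X ^ 2 - r ^ 2) / X) :
    A * r ^ 2 = (A - X) * (1 - A * X) := by
  rw [div_eq_div_iff hA.ne' hX.ne'] at h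
  linear_combination h

lemma mul_lt_one_of_mul_sq_eq (hr : 0 < r) (hA : 0 < A) (hXA : X < A)
    (h : A * r ^ 2 = (A - X) * (1 - A * X)) : A * X < 1 := by
  have hpos : 0 < (A - X) * (1 - A * X) := h ▸ by positivity
  linarith [pos_of_mul_pos_right hpos (by linarith)]

lemma two_sub_add_inv_lt (hX : 0 < X) (hr : 0 < r) (hrX : r < 1 - X) :
    (2 - X - r) + (2 - X - r)⁻¹ < (1 + X ^ 2 - r ^ 2) / X := by
  have hc : 0 < 2 - X - r := by linarith
  have key : (1 + X ^ 2 - r ^ 2) * (2 - X - r) - ((2 - X - r) ^ 2 + 1) * X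
      = (1 - X - r) * ((1 - X - r) * (2 * (1 - X) + r) + 2 * r) := by ring
  have : 0 < (1 - X - r) * ((1 - X - r) * (2 * (1 - X) + r) + 2 * r) := by
    have : 0 < 1 - X - r := by linarith
    have : 0 < 1 - X := by linarith
    positivity
  rw [show (2 - X - r) + (2 - X - r)⁻¹ = ((2 - X - r) ^ 2 + 1) / (2 - X - r) by field_simp,
    div_lt_div_iff₀ hc hX]
  linarith

lemma two_sub_lt_of_sq_add_one_div_eq (hX : 0 < X) (hr : 0 < r) (hrX : r < 1 - X) (hA : 1 < A)
    (h : (A ^ 2 + 1) / A = (1 + X ^ 2 - r ^ 2) / X) : 2 - X - r < A := by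
  refine lt_of_add_inv_lt_add_inv (by linarith) hA.le ?_
  rw [show A + A⁻¹ = (A ^ 2 + 1) / A by field_simp, h]
  exact two_sub_add_inv_lt hX hr hrX

end InvertedBall

lemma mul_sq_lt_log_one_div_sqrt {A t s : ℝ} (hA : 1 < A) (ht : 0 < t) (hAt : A * t < 1)
    (hs : s < A - 1) :
    t ^ 2 * s < log (1 / √(A * (1 - A * t) / (A - t))) := by
  have htA : t < A := by nlinarith
  have hS : 0 < A * (1 - A * t) / (A - t) :=
    div_pos (mul_pos (by linarith) (by linarith)) (by linarith)
  refine lt_of_lt_of_le ?_ (one_sub_div_two_le_log_one_div_sqrt hS)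
  have : A - t ≠ 0 := by linarith
  have hsub : (1 - A * (1 - A * t) / (A - t)) / 2 = t * (A ^ 2 - 1) / (2 * (A - t)) := by
    field_simp
    ring
  rw [hsub, lt_div_iff₀ (by linarith)]
  have hprod : t * (A - t) * s < A - 1 := by
    have : t * (A - t) < 1 := by nlinarith
    nlinarith [mul_pos ht (sub_pos.2 htA)]
  calc t ^ 2 * s * (2 * (A - t)) = t * (2 * (t * (A - t) * s)) := by ring
    _ < t * (2 * (A - 1)) := by gcongr
    _ ≤ t * (A ^ 2 - 1) := by gcongr; nlinarith

theorem log_image_radius_lower_bound_general {n : ℕ}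
    (x : EuclideanSpace ℝ (Fin n)) (r A : ℝ)
    (hx : x ≠ 0) (hr0 : 0 < r) (hr1 : r < 1 - ‖x‖) (hA : 1 < A)
    (hAeq : (A ^ 2 + 1) / A = (1 + ‖x‖ ^ 2 - r ^ 2) / ‖x‖) :
    ∀ t : ℝ, 0 < t → t ≤ ‖x‖ →
      Real.log (1 / Real.sqrt (A * (1 - A * t) / (A - t)))
        > t ^ 2 * (1 - ‖x‖ - r) := by
  intro t ht htx
  have hX : 0 < ‖x‖ := norm_pos_iff.mpr hx
  have hAX : A * ‖x‖ < 1 :=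
    mul_lt_one_of_mul_sq_eq hr0 (by linarith) (by linarith)
      (mul_sq_eq_of_sq_add_one_div_eq hX (by linarith) hAeq)
  have hAt : A * t < 1 := lt_of_le_of_lt (by gcongr) hAX
  have hs : 1 - ‖x‖ - r < A - 1 := by
    linarith [two_sub_lt_of_sq_add_one_div_eq hX hr0 hr1 hA hAeq]
  exact mul_sq_lt_log_one_div_sqrt hA ht hAt hs

/-- inequality (15): Let `x ≠ 0`, `0 < r < 1 − |x|`, and let `A = |a| > 1`
satisfy `(A² + 1)/A = (1 + |x|² − r²)/|x|`. With `(r_t*)² = A(1 − A t)/(A − t)`,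
for all `t ∈ (0, |x|]` one has `log(1/r_t*) > t²(1 − |x| − r)`. -/
theorem log_image_radius_lower_bound {n : ℕ} (hn : 2 ≤ n)
    (x : EuclideanSpace ℝ (Fin n)) (r A : ℝ)
    (hx : x ≠ 0) (hr0 : 0 < r) (hr1 : r < 1 - ‖x‖) (hA : 1 < A)
    (hAeq : (A ^ 2 + 1) / A = (1 + ‖x‖ ^ 2 - r ^ 2) / ‖x‖) :
    ∀ t : ℝ, 0 < t → t ≤ ‖x‖ →
      Real.log (1 / Real.sqrt (A * (1 - A * t) / (A - t)))
        > t ^ 2 * (1 - ‖x‖ - r) :=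
  log_image_radius_lower_bound_general x r A hx hr0 hr1 hA hAeq
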